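/- For every positive integer n there exists a set S of permutations of [n] = {1,…,n} such that any two distinct permutations in S are locally parallel and 6^n · |S| ≥ n!. -/

import Mathlib

/-!
For `π = τ⁻¹ * σ`, the permutations `σ` and `τ` are locally parallel as soon as `π` has an
inversion `p < q` whose position interval `[p, q]` and value interval `[π q, π p]` are disjoint.
A permutation without such an inversion is increasing both on `{p | π p < p}` and on
`{p | p < π p}`, so it is determined by recording, for each `p`, how `π p` compares with `p` and
whether `π⁻¹ p < p`: there are at most `6 ^ n` of them. Hence every `σ` fails to be locally
parallel to at most `6 ^ n` permutations, and a greedy choice gives a pairwise locally parallel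
family of size at least `n! / 6 ^ n`.
-/

/-- Two permutations `σ` and `τ` of `[n]` are *locally parallel* if there exist
distinct elements `a, b` with `σ⁻¹(a) < σ⁻¹(b)`, `τ⁻¹(b) < τ⁻¹(a)`, and the position
intervals `[σ⁻¹(a), σ⁻¹(b)]` and `[τ⁻¹(b), τ⁻¹(a)]` disjoint. -/
def LocallyParallel {n : ℕ} (σ τ : Equiv.Perm (Fin n)) : Prop :=
  ∃ a b : Fin n, a ≠ b ∧ σ⁻¹ a < σ⁻¹ b ∧ τ⁻¹ b < τ⁻¹ a ∧
    Set.Icc (σ⁻¹ a) (σ⁻¹ b) ∩ Set.Icc (τ⁻¹ b) (τ⁻¹ a) = ∅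

open Finset

theorem StrictMonoOn.eqOn_of_image_eq {α β : Type*} [LinearOrder α] [WellFoundedLT α]
    [Preorder β] {f g : α → β} {s : Set α} (hf : StrictMonoOn f s) (hg : StrictMonoOn g s)
    (h : f '' s = g '' s) : s.EqOn f g := fun x hx =>
  congrFun ((hf.domRestrict.range_inj hg.domRestrict).1 (by simpa only [Set.range_domRestrict]))
    ⟨x, hx⟩

theorem Finset.exists_pairwise_subset_card_le_mul {α : Type*} [DecidableEq α]
    {r : α → α → Prop} [DecidableRel r] [Std.Symm r] [Std.Irrefl r] {d : ℕ}
    (V : Finset α) (hd : ∀ a ∈ V, #{b ∈ V | ¬ r a b} ≤ d) :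
    ∃ S ⊆ V, (S : Set α).Pairwise r ∧ #V ≤ d * #S := by
  induction V using Finset.strongInduction with
  | H V ih =>
  obtain rfl | ⟨a, ha⟩ := V.eq_empty_or_nonempty
  · exact ⟨∅, subset_rfl, by simp, by simp⟩
  have hirr : ¬ r a a := Std.Irrefl.irrefl a
  obtain ⟨S, hSV, hS, hcard⟩ := ih {b ∈ V | r a b} (filter_ssubset.2 ⟨a, ha, hirr⟩)
    fun b hb => (card_le_card (filter_subset_filter _ (filter_subset _ _))).trans
      (hd b (filter_subset _ _ hb))
  have haS : a ∉ S := fun h => hirr (mem_filter.1 (hSV h)).2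
  refine ⟨insert a S, insert_subset ha (hSV.trans (filter_subset _ _)), ?_, ?_⟩
  · rw [coe_insert, Set.pairwise_insert_of_symm]
    exact ⟨hS, fun b hb _ => (mem_filter.1 (hSV hb)).2⟩
  · rw [card_insert_of_notMem haS, mul_add_one, ← card_filter_add_card_filter_not (r a)]
    exact add_le_add hcard (hd a ha)

namespace LocallyParallel

variable {n : ℕ}

instance : Std.Symm (LocallyParallel (n := n)) where
  symm _ _ := fun ⟨a, b, hab, hσ, hτ, hdisj⟩ => ⟨b, a, hab.symm, hτ, hσ, by rwa [Set.inter_comm]⟩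

instance : Std.Irrefl (LocallyParallel (n := n)) where
  irrefl _ := fun ⟨_, _, _, hlt, hgt, _⟩ => hlt.asymm hgt

end LocallyParallel

namespace Equiv.Perm

variable {α : Type*} [LinearOrder α]

def HasDisjointInversion (π : Perm α) : Prop :=
  ∃ p q, p < q ∧ π q < π p ∧ (π p < p ∨ q < π q)

theorem _root_.LocallyParallel.of_hasDisjointInversion_inv_mul {n : ℕ} {σ τ : Perm (Fin n)}
    (h : (τ⁻¹ * σ).HasDisjointInversion) : LocallyParallel σ τ := by
  obtain ⟨p, q, hpq, hinv, hdisj⟩ := h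
  refine ⟨σ p, σ q, σ.injective.ne hpq.ne, by simpa, by simpa using hinv, ?_⟩
  simp only [coe_inv, mul_apply, symm_apply_apply, Set.eq_empty_iff_forall_notMem,
    Set.mem_inter_iff, Set.mem_Icc] at hdisj ⊢
  omega

section NoDisjointInversion

variable {π : Perm α} (h : ¬ π.HasDisjointInversion)
include h

theorem strictMonoOn_lt_self : StrictMonoOn π {p | π p < p} := fun p hp q _ hpq =>
  (le_of_not_gt fun hqp => h ⟨p, q, hpq, hqp, .inl hp⟩).lt_of_ne (π.injective.ne hpq.ne)

theorem strictMonoOn_gt_self : StrictMonoOn π {p | p < π p} := fun p _ q hq hpq =>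
  (le_of_not_gt fun hqp => h ⟨p, q, hpq, hqp, .inr hq⟩).lt_of_ne (π.injective.ne hpq.ne)

end NoDisjointInversion

theorem image_lt_self (π : Perm α) : π '' {p | π p < p} = {w | w < π⁻¹ w} := by
  ext w; simp [π.image_eq_preimage_symm]

theorem image_gt_self (π : Perm α) : π '' {p | p < π p} = {w | π⁻¹ w < w} := by
  ext w; simp [π.image_eq_preimage_symm]

theorem eq_of_not_hasDisjointInversion [WellFoundedLT α] {π ρ : Perm α}
    (hπ : ¬ π.HasDisjointInversion) (hρ : ¬ ρ.HasDisjointInversion)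
    (hcmp : ∀ p, cmp (π p) p = cmp (ρ p) p) (hinv : ∀ p, π⁻¹ p < p ↔ ρ⁻¹ p < p) : π = ρ := by
  have hlt : {p | π p < p} = {p | ρ p < p} := by ext p; simp [← cmp_eq_lt_iff, hcmp]
  have hgt : {p | p < π p} = {p | p < ρ p} := by ext p; simp [← cmp_eq_gt_iff, hcmp]
  have hfix : ∀ p, π p = p ↔ ρ p = p := fun p => by simp [← cmp_eq_eq_iff, hcmp]
  have hfix' : ∀ p, π⁻¹ p = p ↔ ρ⁻¹ p = p := fun p => by
    rw [inv_eq_iff_eq, inv_eq_iff_eq, eq_comm, hfix, eq_comm]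
  have hinv' : ∀ p, p < π⁻¹ p ↔ p < ρ⁻¹ p := fun p => by
    rw [← not_le, ← not_le, le_iff_lt_or_eq, le_iff_lt_or_eq, hinv, hfix']
  ext p
  rcases lt_trichotomy (π p) p with hp | hp | hp
  · refine (strictMonoOn_lt_self hπ).eqOn_of_image_eq (hlt ▸ strictMonoOn_lt_self hρ) ?_ hp
    rw [image_lt_self, hlt, image_lt_self]
    ext w; exact hinv' w
  · rw [hp, (hfix p).1 hp]
  · refine (strictMonoOn_gt_self hπ).eqOn_of_image_eq (hgt ▸ strictMonoOn_gt_self hρ) ?_ hp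
    rw [image_gt_self, hgt, image_gt_self]
    ext w; exact hinv w

open scoped Classical in
theorem card_filter_not_hasDisjointInversion_le [Fintype α] :
    #{π : Perm α | ¬ π.HasDisjointInversion} ≤ 6 ^ Fintype.card α := by
  calc #{π : Perm α | ¬ π.HasDisjointInversion}
      ≤ #(univ : Finset (α → Ordering × Bool)) :=
        card_le_card_of_injOn (fun π p => (cmp (π p) p, decide (π⁻¹ p < p)))
          (fun _ _ => mem_coe.2 (mem_univ _)) fun π hπ ρ hρ hfp => by
            simp only [funext_iff, Prod.ext_iff, decide_eq_decide] at hfp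
            exact eq_of_not_hasDisjointInversion (mem_filter.1 hπ).2 (mem_filter.1 hρ).2
              (fun p => (hfp p).1) fun p => (hfp p).2
    _ = 6 ^ Fintype.card α := by
      rw [card_univ, Fintype.card_fun, Fintype.card_prod, Fintype.card_bool]; rfl

end Equiv.Perm

open scoped Classical in
theorem card_filter_not_locallyParallel_le {n : ℕ} (σ : Equiv.Perm (Fin n)) :
    #{τ | ¬ LocallyParallel σ τ} ≤ 6 ^ n := by
  calc #{τ | ¬ LocallyParallel σ τ}
      ≤ #{π : Equiv.Perm (Fin n) | ¬ π.HasDisjointInversion} :=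
        card_le_card_of_injOn (fun τ => τ⁻¹ * σ)
          (fun τ hτ => mem_filter.2 ⟨mem_univ _,
            mt LocallyParallel.of_hasDisjointInversion_inv_mul (mem_filter.1 hτ).2⟩)
          fun _ _ _ _ h => inv_injective (mul_right_cancel h)
    _ ≤ 6 ^ n := by simpa using Equiv.Perm.card_filter_not_hasDisjointInversion_le (α := Fin n)

theorem exists_pairwise_locallyParallel_general (n : ℕ) :
    ∃ S : Finset (Equiv.Perm (Fin n)),
      (∀ σ ∈ S, ∀ τ ∈ S, σ ≠ τ → LocallyParallel σ τ) ∧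
      Nat.factorial n ≤ 6 ^ n * S.card := by
  classical
  obtain ⟨S, -, hS, hcard⟩ := exists_pairwise_subset_card_le_mul univ
    fun σ _ => card_filter_not_locallyParallel_le σ
  refine ⟨S, hS, ?_⟩
  simpa [Fintype.card_perm] using hcard

/-- There is a set of pairwise locally parallel permutations of `[n]` of size at
least `n! / 6 ^ n`. -/
theorem exists_pairwise_locallyParallel (n : ℕ) (hn : 0 < n) :
    ∃ S : Finset (Equiv.Perm (Fin n)),
      (∀ σ ∈ S, ∀ τ ∈ S, σ ≠ τ → LocallyParallel σ τ) ∧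
      Nat.factorial n ≤ 6 ^ n * S.card :=
  exists_pairwise_locallyParallel_general n
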